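/- arXiv:2407.06885 — 3 statements merged into one kernel-verified Lean document; each statement's English description precedes it below -/
import Mathlib

section
/- Execution of a well-typed action only modifies its statically declared write set: if action a has action type with write set ω under Δ, and executing a on store S yields store S', then S'(g) = S(g) for every state variable g ∉ ω. -/
/-- Names of state variables and definitions. -/
abbrev Name := ℕ
/-- Abstract types. -/
abbrev Ty := ℕ
/-- Typing environments: finite-domain maps from names to (dependency set, type). -/
abbrev Env := Name → Option (Finset Name × Ty)

/-- Domain of an environment. -/
def Env.dom (Δ : Env) : Set Name := {f | (Δ f).isSome}

/-- Direct dependency: `g` is a direct dependency of `f` in `Δ`. -/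
def Env.dep (Δ : Env) (g f : Name) : Prop := ∃ p, Δ f = some p ∧ g ∈ p.1

/-- Right-biased union: entries of `Δ'` overwrite entries of `Δ`. -/
def Env.merge (Δ Δ' : Env) : Env := fun f => (Δ' f).elim (Δ f) some

/-- Dependency-closedness: every dependency is in the domain. -/
def Env.Closed (Δ : Env) : Prop := ∀ g f, Δ.dep g f → g ∈ Δ.dom

/-- Acyclicity of the dependency graph: no directed cycle, i.e. the
transitive closure of the edge relation is irreflexive. -/
def Env.Acyclic (Δ : Env) : Prop := Irreflexive (Relation.TransGen Δ.dep)

/-- Well-formedness of a typing environment. -/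
def Env.WF (Δ : Env) : Prop := Δ.Closed ∧ Δ.Acyclic

variable {Expr : Type}

/-- The typing judgment for actions (finite sequences of assignments
`f := e`), parameterized by the expression typing judgment
`tyE e τ δ` ("`e` has type `τ` with read set `δ`").
The empty action has read set `∅` and write set `∅`; extending an action of
read set `δ` and write set `ω` with an assignment `f := e`, where `f` is a
state variable of `Δ` (dependency set `∅`) of type `τ` and `e : τ` has read
set `δ'`, yields read set `δ ∪ δ'` and write set `ω ∪ {f}`. -/
inductive ATy (Δ : Env) (tyE : Expr → Ty → Finset Name → Prop) :
    List (Name × Expr) → Finset Name → Finset Name → Prop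
  | nil : ATy Δ tyE [] ∅ ∅
  | snoc {a : List (Name × Expr)} {δ ω δ' : Finset Name} {f : Name} {e : Expr}
      {τ : Ty} :
      ATy Δ tyE a δ ω → Δ f = some (∅, τ) → tyE e τ δ' →
      ATy Δ tyE (a ++ [(f, e)]) (δ ∪ δ') (ω ∪ {f})

variable {Val : Type}

/-- Execution of an action: assignments are processed left to right, each
right-hand side evaluated in the current store (a map from names to values)
and the assigned name updated. -/
def execAction (eval : (Name → Val) → Expr → Val)
    (a : List (Name × Expr)) (S : Name → Val) : Name → Val :=
  a.foldl (fun S p => Function.update S p.1 (eval S p.2)) S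

/-- execution of a well-typed action only modifies its
statically declared write set: if `a` has action type with write set `ω`
under `Δ`, then executing `a` leaves every state variable `g ∉ ω`
unchanged. -/
theorem exec_frame
    (Δ : Env) (tyE : Expr → Ty → Finset Name → Prop)
    (eval : (Name → Val) → Expr → Val)
    (a : List (Name × Expr)) (δ ω : Finset Name)
    (hty : ATy Δ tyE a δ ω)
    (S : Name → Val) (g : Name) (hg : g ∉ ω) :
    execAction eval a S g = S g := by
  induction hty with
  | nil => rfl
  | snoc h hf he ih =>
    simp only [Finset.mem_union, Finset.mem_singleton, not_or] at hg
    simp [execAction, List.foldl_append] at *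
    rw [Function.update_of_ne hg.2]
    exact ih hg.1
end

section
/- Disjoint-write updates of finite maps commute: if T₁ and T₂ are functions on finite maps (from names to values) such that T₁ only changes values at keys in a set W₁, T₂ only changes values at keys in W₂, W₁ ∩ W₂ = ∅, and each Tᵢ's output at keys in Wᵢ depends only on the restriction of the input to keys outside W_{3−i} (i.e., neither reads the other's write set), then T₁ ∘ T₂ = T₂ ∘ T₁. -/
/-- disjoint-write updates of stores commute: if `T₁` only
changes keys in `W₁`, `T₂` only changes keys in `W₂`, `W₁ ∩ W₂ = ∅`, and
neither transformer reads the other's write set (its output on its own write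
set depends only on the restriction of the input outside the other's write
set), then `T₁ ∘ T₂ = T₂ ∘ T₁`. -/
theorem disjoint_writes_commute {Val : Type}
    (T₁ T₂ : (Name → Val) → (Name → Val)) (W₁ W₂ : Set Name)
    (hW : W₁ ∩ W₂ = ∅)
    (hframe₁ : ∀ σ k, k ∉ W₁ → T₁ σ k = σ k)
    (hframe₂ : ∀ σ k, k ∉ W₂ → T₂ σ k = σ k)
    (hdep₁ : ∀ σ σ', (∀ k ∉ W₂, σ k = σ' k) → ∀ k ∈ W₁, T₁ σ k = T₁ σ' k)
    (hdep₂ : ∀ σ σ', (∀ k ∉ W₁, σ k = σ' k) → ∀ k ∈ W₂, T₂ σ k = T₂ σ' k) :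
    T₁ ∘ T₂ = T₂ ∘ T₁ := by
  have hdisj : ∀ k, k ∈ W₁ → k ∉ W₂ := by
    intro k h1 h2
    exact Set.eq_empty_iff_forall_notMem.mp hW k ⟨h1, h2⟩
  funext σ k
  simp only [Function.comp_apply]
  by_cases h1 : k ∈ W₁
  · have h2 : k ∉ W₂ := hdisj k h1
    rw [hframe₂ _ k h2]
    exact hdep₁ (T₂ σ) σ (fun j hj => hframe₂ σ j hj) k h1
  · by_cases h2 : k ∈ W₂
    · rw [hframe₁ _ k h1]
      exact hdep₂ σ (T₁ σ) (fun j hj => (hframe₁ σ j hj).symm) k h2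
    · rw [hframe₁ _ k h1, hframe₂ _ k h2, hframe₂ _ k h2, hframe₁ _ k h1]
end

section
/- Well-typed single update step preserves store typing after propagation: if Δ is well-formed, S is a store typed by Δ (every name in dom(Δ) maps to a value of its declared type), Δ ⊎ Δ' is well-formed, and propagation recomputes the value of every definition in dom(Δ') and their transitive dependents using the typing-respecting evaluation function, then the resulting store S' is typed by Δ ⊎ Δ'. -/
variable {Val : Type}

/-- A store `S` is typed by `Δ` if every declared name holds a value of its
declared type (w.r.t. a type-indexed value predicate `hasTy`). -/
def StoreTyped (hasTy : Val → Ty → Prop) (Δ : Env) (S : Name → Val) : Prop :=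
  ∀ f p, Δ f = some p → hasTy (S f) p.2

/-- a well-typed single update step preserves store typing
after propagation: if `Δ` is well-formed, `S` is typed by `Δ`, `Δ ⊎ Δ'` is
well-formed, and propagation recomputes (in the new store `S'`) the value of
every name in a recompute set `R` containing `dom Δ'` and closed under
transitive dependents, using an evaluation function that returns a value of
the declared type whenever the dependencies are well-typed, while names
outside `R` keep their old values and old declarations, then `S'` is typed
by `Δ ⊎ Δ'`. -/
theorem update_preserves_store_typing
    (hasTy : Val → Ty → Prop) (Δ Δ' : Env) (S S' : Name → Val)
    (evalDef : Name → (Name → Val) → Val)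
    (R : Set Name)
    (hwfΔ : Δ.WF)
    (hS : StoreTyped hasTy Δ S)
    (hwf : (Δ.merge Δ').WF)
    (hfin : (Δ.merge Δ').dom.Finite)
    -- the recompute set contains all updated definitions
    (hRnew : Δ'.dom ⊆ R)
    (hRdom : R ⊆ (Δ.merge Δ').dom)
    -- and is closed under transitive dependents
    (hRclosed : ∀ f g, (Δ.merge Δ').dep g f → g ∈ R → f ∈ R)
    -- evaluation respects typing: whenever the dependencies of `f` are
    -- well-typed in the store, evaluating `f`'s defining expression
    -- produces a value of `f`'s declared type
    (heval : ∀ f p (T : Name → Val), (Δ.merge Δ') f = some p →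
        (∀ g q, g ∈ p.1 → (Δ.merge Δ') g = some q → hasTy (T g) q.2) →
        hasTy (evalDef f T) p.2)
    -- propagation recomputes every name in `R` and keeps the rest
    (hprop : ∀ f, f ∈ R → S' f = evalDef f S')
    (hkeep : ∀ f, f ∉ R → S' f = S f ∧ (Δ.merge Δ') f = Δ f) :
    StoreTyped hasTy (Δ.merge Δ') S' := by
  classical
  have hclosed := hwf.1
  have hacyc := hwf.2
  set M := Δ.merge Δ' with hM
  set D := hfin.toFinset with hD
  set m : Name → ℕ :=
    fun f => (D.filter (fun g => Relation.TransGen M.dep g f)).card with hm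
  have hmono : ∀ g f, M.dep g f → m g < m f := by
    intro g f hgf
    apply Finset.card_lt_card
    constructor
    · intro h hh
      simp only [Finset.mem_filter] at hh ⊢
      exact ⟨hh.1, hh.2.trans (Relation.TransGen.single hgf)⟩
    · intro hsub
      have hg : g ∈ D.filter (fun h => Relation.TransGen M.dep h f) := by
        simp only [Finset.mem_filter]
        refine ⟨?_, Relation.TransGen.single hgf⟩
        rw [hD, Set.Finite.mem_toFinset]
        exact hclosed g f hgf
      have := hsub hg
      simp only [Finset.mem_filter] at this
      exact hacyc g this.2
  have main : ∀ n f, m f ≤ n → ∀ p, M f = some p → hasTy (S' f) p.2 := by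
    intro n
    induction n with
    | zero =>
      intro f hf p hfp
      by_cases hfR : f ∈ R
      · rw [hprop f hfR]
        refine heval f p S' hfp ?_
        intro g q hg hgq
        exact absurd (lt_of_lt_of_le (hmono g f ⟨p, hfp, hg⟩) hf) (by omega)
      · obtain ⟨hS', hΔ⟩ := hkeep f hfR
        rw [hS']
        exact hS f p (hΔ ▸ hfp)
    | succ n ih =>
      intro f hf p hfp
      by_cases hfR : f ∈ R
      · rw [hprop f hfR]
        refine heval f p S' hfp ?_
        intro g q hg hgq
        have hlt := hmono g f ⟨p, hfp, hg⟩
        exact ih g (by omega) q hgq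
      · obtain ⟨hS', hΔ⟩ := hkeep f hfR
        rw [hS']
        exact hS f p (hΔ ▸ hfp)
  intro f p hfp
  exact main (m f) f le_rfl p hfp
end
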